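/- arXiv:1108.1301 — 3 statements merged into one kernel-verified Lean document; each statement's English description precedes it below -/
import Mathlib

section
/- Let G = {g₁^[v₁],…,g_s^[v_s]} be a full-labeled Gröbner basis for I. Let c ∈ K be a nonzero constant, x^α e_j a module term, and f ∈ I a polynomial such that there exists u ∈ R^m with lm(u) = c·x^α e_j and f = u·F. Then there exist polynomials p₁,…,p_s ∈ R such that f = c·x^α·f_j + p₁g₁ + … + p_s g_s and x^α e_j ≻ lpp(p_i·v_i) for i = 1,…,s. Moreover, for such p₁,…,p_s, the vector u' := c·x^α e_j + p₁v₁ + … + p_s v_s satisfies lm(u') = c·x^α e_j and f = u'·F. -/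
open MvPolynomial

noncomputable section

/-- Power products of `K[x₁,…,xₙ]`, recorded by their exponent vectors
(so `x^α ∣ x^β` is `α ≤ β` and `x^α · x^β` is `α + β`). -/
abbrev PP (n : ℕ) := Fin n →₀ ℕ

/-- Module terms `x^α • eᵢ` of the free module `R^m`. -/
abbrev MTerm (n m : ℕ) := PP n × Fin m

/-- Multiplication of a module term by a power product. -/
def mtmul {n m : ℕ} (γ : PP n) (t : MTerm n m) : MTerm n m := (γ + t.1, t.2)

/-- A monomial order `≺₁` on the power products of `K[x₁,…,xₙ]`. -/
structure MonOrd (n : ℕ) where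
  ord : LinearOrder (PP n)
  mul_lt : ∀ γ a b : PP n, ord.lt a b → ord.lt (γ + a) (γ + b)
  one_le : ∀ a : PP n, ord.le 0 a
  wf : WellFounded ord.lt

/-- A term order `≺₂` on the module terms of `R^m`: a well-order compatible with
multiplication by power products. -/
structure ModOrd (n m : ℕ) where
  ord : LinearOrder (MTerm n m)
  mul_lt : ∀ (γ : PP n) (a b : MTerm n m), ord.lt a b → ord.lt (mtmul γ a) (mtmul γ b)
  wf : WellFounded ord.lt

variable {K : Type*} [Field K] {n m : ℕ}

/-- Elements of the free module `R^m`. -/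
abbrev ModElem (K : Type*) [Field K] (n m : ℕ) := Fin m → MvPolynomial (Fin n) K

/-- `u · F = u₁f₁ + … + u_m f_m`. -/
def dotF (u : ModElem K n m) (F : Fin m → MvPolynomial (Fin n) K) : MvPolynomial (Fin n) K :=
  ∑ i, u i * F i

/-- Leading power product of a polynomial, valued in `WithBot` so that `lppW 0 = ⊥`
(the convention `lpp 0 = 0 ≺ t` for all terms `t`). -/
def lppW (o : MonOrd n) (f : MvPolynomial (Fin n) K) : WithBot (PP n) :=
  @Finset.max (PP n) o.ord f.support

/-- Leading power product of a (nonzero) polynomial. -/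
def lpp (o : MonOrd n) (f : MvPolynomial (Fin n) K) : PP n :=
  (lppW o f).unbotD 0

/-- Leading coefficient of a polynomial (`lc 0 = 0`). -/
def lc (o : MonOrd n) (f : MvPolynomial (Fin n) K) : K := f.coeff (lpp o f)

/-- The set of module terms occurring in a module element. -/
def msupport (u : ModElem K n m) : Finset (MTerm n m) :=
  Finset.univ.biUnion fun i => (u i).support.image fun α => (α, i)

/-- Leading module term (signature) of a module element, `⊥` for the zero element. -/
def lppMW (o : ModOrd n m) (u : ModElem K n m) : WithBot (MTerm n m) :=
  @Finset.max (MTerm n m) o.ord (msupport u)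

/-- Coefficient of a module element at a module term. -/
def mcoeff (u : ModElem K n m) (t : MTerm n m) : K := (u t.2).coeff t.1

/-- Leading coefficient of a module element (`0` for the zero element). -/
def lcM (o : ModOrd n m) (u : ModElem K n m) : K :=
  WithBot.recBotCoe 0 (fun t => mcoeff u t) (lppMW o u)

/-- `⪯` on `WithBot`-valued leading power products w.r.t. `≺₁`. -/
def wbleP (o : MonOrd n) (a b : WithBot (PP n)) : Prop :=
  @LE.le (WithBot (PP n)) (@WithBot.instLE (PP n) o.ord.toLE) a b
/-- `≺` on `WithBot`-valued leading power products w.r.t. `≺₁`. -/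
def wbltP (o : MonOrd n) (a b : WithBot (PP n)) : Prop :=
  @LT.lt (WithBot (PP n)) (@WithBot.instLT (PP n) o.ord.toLT) a b
/-- `⪯` on `WithBot`-valued signatures w.r.t. `≺₂`. -/
def wbleM (o : ModOrd n m) (a b : WithBot (MTerm n m)) : Prop :=
  @LE.le (WithBot (MTerm n m)) (@WithBot.instLE (MTerm n m) o.ord.toLE) a b
/-- `≺` on `WithBot`-valued signatures w.r.t. `≺₂`. -/
def wbltM (o : ModOrd n m) (a b : WithBot (MTerm n m)) : Prop :=
  @LT.lt (WithBot (MTerm n m)) (@WithBot.instLT (MTerm n m) o.ord.toLT) a b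

/-- Multiplication of a module element by a power product `x^t`. -/
def smulPP (t : PP n) (u : ModElem K n m) : ModElem K n m := fun k => monomial t (1 : K) * u k

/-- Multiplication of a module element by a polynomial. -/
def pmul (p : MvPolynomial (Fin n) K) (u : ModElem K n m) : ModElem K n m := fun k => p * u k

/-- The `j`-th standard basis vector `e_j` of `R^m`. -/
def eVec (j : Fin m) : ModElem K n m := fun k => if k = j then 1 else 0

/-- The module element `c · x^α · e_j`. -/
def termVec (α : PP n) (c : K) (j : Fin m) : ModElem K n m :=
  fun k => if k = j then monomial α c else 0

/-- `G = {g₁^[v₁], …, g_s^[v_s]}` is a full-labeled Gröbner basis for `I = ⟨F⟩`: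
each `gᵢ = vᵢ · F`, and for every labeled polynomial `f^[u]` of `I` with `f ≠ 0`
there is `i` with `lpp(gᵢ) ∣ lpp(f)` and `lpp(t·vᵢ) ⪯ lpp(u)`, `t = lpp(f)/lpp(gᵢ)`. -/
def IsFullLGB (o1 : MonOrd n) (o2 : ModOrd n m) (F : Fin m → MvPolynomial (Fin n) K)
    {s : ℕ} (g : Fin s → MvPolynomial (Fin n) K) (v : Fin s → ModElem K n m) : Prop :=
  (∀ i, g i = dotF (v i) F) ∧
  ∀ (f : MvPolynomial (Fin n) K) (u : ModElem K n m), f = dotF u F → f ≠ 0 →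
    ∃ i, g i ≠ 0 ∧ lpp o1 (g i) ≤ lpp o1 f ∧
      wbleM o2 (lppMW o2 (smulPP (lpp o1 f - lpp o1 (g i)) (v i))) (lppMW o2 u)

/-- `S = {g₁^(t₁), …, g_s^(t_s)}` is a signature-labeled Gröbner basis for `I = ⟨F⟩`. -/
def IsSigLGB (o1 : MonOrd n) (o2 : ModOrd n m) (F : Fin m → MvPolynomial (Fin n) K)
    {s : ℕ} (g : Fin s → MvPolynomial (Fin n) K) (t : Fin s → MTerm n m) : Prop :=
  ∃ v : Fin s → ModElem K n m, (∀ i, lppMW o2 (v i) = (t i : WithBot (MTerm n m))) ∧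
    IsFullLGB o1 o2 F g v

/-- `g^[v]` is a standard form of the module term `T` in `I = ⟨F⟩`. -/
def IsStdForm (o1 : MonOrd n) (o2 : ModOrd n m) (F : Fin m → MvPolynomial (Fin n) K)
    (T : MTerm n m) (g : MvPolynomial (Fin n) K) (v : ModElem K n m) : Prop :=
  g = dotF v F ∧ lppMW o2 v = (T : WithBot (MTerm n m)) ∧
  ∀ (f : MvPolynomial (Fin n) K) (u : ModElem K n m), f = dotF u F →
    lppMW o2 u = (T : WithBot (MTerm n m)) → wbleP o1 (lppW o1 g) (lppW o1 f)

/-- `≺₂` is the position-over-term extension of `≺₁`: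
`x^α eᵢ ≺₂ x^β e_j` iff `i > j`, or `i = j` and `x^α ≺₁ x^β`. -/
def IsPOT (o1 : MonOrd n) (o2 : ModOrd n m) : Prop :=
  ∀ a b : MTerm n m, o2.ord.lt a b ↔ (b.2 < a.2 ∨ (a.2 = b.2 ∧ o1.ord.lt a.1 b.1))

/-- `f^(T)` is an admissible labeled polynomial: some `u` satisfies `f = u·F`, `lpp(u) = T`. -/
def Admissible (o2 : ModOrd n m) (F : Fin m → MvPolynomial (Fin n) K)
    (f : MvPolynomial (Fin n) K) (T : MTerm n m) : Prop :=
  ∃ u : ModElem K n m, f = dotF u F ∧ lppMW o2 u = (T : WithBot (MTerm n m))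

/-- `r` is a strict total order on the set `B` (`r p q` read: `p` was added later than `q`). -/
def StrictTotalOn {X : Type*} (B : Set X) (r : X → X → Prop) : Prop :=
  (∀ p ∈ B, ¬ r p p) ∧
  (∀ p ∈ B, ∀ q ∈ B, ∀ w ∈ B, r p q → r q w → r p w) ∧
  (∀ p ∈ B, ∀ q ∈ B, p ≠ q → r p q ∨ r q p)

/-- `tf o1 f g = lcm(lpp f, lpp g) / lpp f`. -/
def tf (o1 : MonOrd n) (f g : MvPolynomial (Fin n) K) : PP n :=
  (lpp o1 f ⊔ lpp o1 g) - lpp o1 f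

/-- `f^[u]` has a standard representation w.r.t. the set `B` of labeled polynomials. -/
def HasStdRep (o1 : MonOrd n) (o2 : ModOrd n m)
    (B : Set (MvPolynomial (Fin n) K × ModElem K n m))
    (f : MvPolynomial (Fin n) K) (u : ModElem K n m) : Prop :=
  ∃ (s : ℕ) (p : Fin s → MvPolynomial (Fin n) K)
      (q : Fin s → MvPolynomial (Fin n) K × ModElem K n m),
    (∀ i, q i ∈ B) ∧ f = ∑ i, p i * (q i).1 ∧
    (∀ i, wbleP o1 (lppW o1 (p i * (q i).1)) (lppW o1 f)) ∧
    (∀ i, wbleM o2 (lppMW o2 (pmul (p i) ((q i).2))) (lppMW o2 u))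

/-- `(t_p, p, t_q, q)` is a critical pair of labeled polynomials. -/
def IsCritPairL (o1 : MonOrd n) (o2 : ModOrd n m)
    (later : (MvPolynomial (Fin n) K × ModElem K n m) →
      (MvPolynomial (Fin n) K × ModElem K n m) → Prop)
    (p q : MvPolynomial (Fin n) K × ModElem K n m) : Prop :=
  p.1 ≠ 0 ∧ q.1 ≠ 0 ∧
  (wbltM o2 (lppMW o2 (smulPP (tf o1 q.1 p.1) q.2)) (lppMW o2 (smulPP (tf o1 p.1 q.1) p.2)) ∨
   (lppMW o2 (smulPP (tf o1 p.1 q.1) p.2) = lppMW o2 (smulPP (tf o1 q.1 p.1) q.2) ∧ later q p))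

/-- Polynomial part of the S-polynomial of a critical pair of labeled polynomials. -/
def sPolyF (o1 : MonOrd n) (p q : MvPolynomial (Fin n) K × ModElem K n m) :
    MvPolynomial (Fin n) K :=
  monomial (tf o1 p.1 q.1) (1 : K) * p.1 -
    monomial (tf o1 q.1 p.1) (lc o1 p.1 / lc o1 q.1) * q.1

/-- Label part of the S-polynomial of a critical pair of labeled polynomials. -/
def sPolyU (o1 : MonOrd n) (p q : MvPolynomial (Fin n) K × ModElem K n m) : ModElem K n m :=
  fun k => monomial (tf o1 p.1 q.1) (1 : K) * p.2 k -
    monomial (tf o1 q.1 p.1) (lc o1 p.1 / lc o1 q.1) * q.2 k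

/-- `t·p` (labeled version) is F5-divisible by `B`. -/
def F5DivL (o1 : MonOrd n) (o2 : ModOrd n m)
    (B : Set (MvPolynomial (Fin n) K × ModElem K n m)) (t : PP n)
    (p : MvPolynomial (Fin n) K × ModElem K n m) : Prop :=
  ∃ (α : PP n) (i : Fin m), lppMW o2 p.2 = (((α, i) : MTerm n m) : WithBot (MTerm n m)) ∧
    ∃ q ∈ B, q.1 ≠ 0 ∧ ∃ (β : PP n) (j : Fin m),
      lppMW o2 q.2 = (((β, j) : MTerm n m) : WithBot (MTerm n m)) ∧
      lpp o1 q.1 ≤ t + α ∧ o2.ord.lt (((0 : PP n), j) : MTerm n m) (((0 : PP n), i) : MTerm n m)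

/-- `t·p` (labeled version) is F5-rewritable by `B`. -/
def F5RewL (o2 : ModOrd n m)
    (later : (MvPolynomial (Fin n) K × ModElem K n m) →
      (MvPolynomial (Fin n) K × ModElem K n m) → Prop)
    (B : Set (MvPolynomial (Fin n) K × ModElem K n m)) (t : PP n)
    (p : MvPolynomial (Fin n) K × ModElem K n m) : Prop :=
  ∃ q ∈ B, (∃ a b : MTerm n m, lppMW o2 q.2 = (a : WithBot (MTerm n m)) ∧
    lppMW o2 (smulPP t p.2) = (b : WithBot (MTerm n m)) ∧ a.2 = b.2 ∧ a.1 ≤ b.1) ∧ later q p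

/-- A set `G` of labeled polynomials is a full-labeled Gröbner basis for `I = ⟨F⟩`. -/
def IsFullLGBSet (o1 : MonOrd n) (o2 : ModOrd n m) (F : Fin m → MvPolynomial (Fin n) K)
    (G : Set (MvPolynomial (Fin n) K × ModElem K n m)) : Prop :=
  (∀ p ∈ G, p.1 = dotF p.2 F) ∧
  ∀ (f : MvPolynomial (Fin n) K) (u : ModElem K n m), f = dotF u F → f ≠ 0 →
    ∃ p ∈ G, p.1 ≠ 0 ∧ lpp o1 p.1 ≤ lpp o1 f ∧
      wbleM o2 (lppMW o2 (smulPP (lpp o1 f - lpp o1 p.1) p.2)) (lppMW o2 u)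

/-- `t·p` (signature version, `p = f^(x^α eᵢ)`) is F5-divisible by `B`. -/
def F5DivS (o1 : MonOrd n) (o2 : ModOrd n m)
    (B : Set (MvPolynomial (Fin n) K × MTerm n m)) (t : PP n)
    (p : MvPolynomial (Fin n) K × MTerm n m) : Prop :=
  ∃ q ∈ B, q.1 ≠ 0 ∧ lpp o1 q.1 ≤ t + p.2.1 ∧
    o2.ord.lt (((0 : PP n), q.2.2) : MTerm n m) (((0 : PP n), p.2.2) : MTerm n m)

/-- `t·p` (signature version) is F5-rewritable by `B`. -/
def F5RewS
    (later : (MvPolynomial (Fin n) K × MTerm n m) →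
      (MvPolynomial (Fin n) K × MTerm n m) → Prop)
    (B : Set (MvPolynomial (Fin n) K × MTerm n m)) (t : PP n)
    (p : MvPolynomial (Fin n) K × MTerm n m) : Prop :=
  ∃ q ∈ B, q.2.2 = p.2.2 ∧ q.2.1 ≤ t + p.2.1 ∧ later q p

/-- `(t_p, p, t_q, q)` is a critical pair (signature version). -/
def IsCritPairS (o1 : MonOrd n) (o2 : ModOrd n m)
    (later : (MvPolynomial (Fin n) K × MTerm n m) →
      (MvPolynomial (Fin n) K × MTerm n m) → Prop)
    (p q : MvPolynomial (Fin n) K × MTerm n m) : Prop :=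
  p.1 ≠ 0 ∧ q.1 ≠ 0 ∧
  (o2.ord.lt (mtmul (tf o1 q.1 p.1) q.2) (mtmul (tf o1 p.1 q.1) p.2) ∨
   (mtmul (tf o1 p.1 q.1) p.2 = mtmul (tf o1 q.1 p.1) q.2 ∧ later q p))

/-- A finite set `S` of pairs `(g, t)` is a signature-labeled Gröbner basis for `I = ⟨F⟩`. -/
def IsSigLGBSet (o1 : MonOrd n) (o2 : ModOrd n m) (F : Fin m → MvPolynomial (Fin n) K)
    (S : Set (MvPolynomial (Fin n) K × MTerm n m)) : Prop :=
  S.Finite ∧ ∃ V : MvPolynomial (Fin n) K × MTerm n m → ModElem K n m,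
    (∀ p ∈ S, lppMW o2 (V p) = (p.2 : WithBot (MTerm n m))) ∧
    IsFullLGBSet o1 o2 F ((fun p => (p.1, V p)) '' S)

end

noncomputable section AuxLemmas
variable {K : Type*} [Field K] {n m : ℕ}

/-! ### Basic order kit for `wbleM`/`wbltM` (explicit instances, no `letI`) -/

lemma wbleM_iff (o2 : ModOrd n m) {a b : WithBot (MTerm n m)} :
    wbleM o2 a b ↔ ∀ x : MTerm n m, a = ↑x → ∃ y : MTerm n m, b = ↑y ∧ o2.ord.le x y :=
  @WithBot.le_iff_forall _ o2.ord.toLE a b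

lemma wbltM_iff (o2 : ModOrd n m) {a b : WithBot (MTerm n m)} :
    wbltM o2 a b ↔ ∃ y : MTerm n m, b = ↑y ∧ ∀ x : MTerm n m, a = ↑x → o2.ord.lt x y :=
  @WithBot.lt_iff_exists _ o2.ord.toLT a b

lemma wbleP_iff (o1 : MonOrd n) {a b : WithBot (PP n)} :
    wbleP o1 a b ↔ ∀ x : PP n, a = ↑x → ∃ y : PP n, b = ↑y ∧ o1.ord.le x y :=
  @WithBot.le_iff_forall _ o1.ord.toLE a b

lemma wbltP_iff (o1 : MonOrd n) {a b : WithBot (PP n)} :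
    wbltP o1 a b ↔ ∃ y : PP n, b = ↑y ∧ ∀ x : PP n, a = ↑x → o1.ord.lt x y :=
  @WithBot.lt_iff_exists _ o1.ord.toLT a b

lemma wbleM_bot (o2 : ModOrd n m) (b : WithBot (MTerm n m)) : wbleM o2 ⊥ b :=
  (wbleM_iff o2).2 fun x hx => nomatch hx

lemma wbltM_bot_coe (o2 : ModOrd n m) (b : MTerm n m) : wbltM o2 ⊥ ↑b :=
  (wbltM_iff o2).2 ⟨b, rfl, fun x hx => nomatch hx⟩

lemma wbleM_coe_coe (o2 : ModOrd n m) {a b : MTerm n m} :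
    wbleM o2 ↑a ↑b ↔ o2.ord.le a b := by
  rw [wbleM_iff]
  constructor
  · intro h
    obtain ⟨y, hy, hxy⟩ := h a rfl
    obtain rfl : b = y := by injection hy
    exact hxy
  · intro h x hx
    obtain rfl : a = x := by injection hx
    exact ⟨b, rfl, h⟩

lemma wbltM_coe_coe (o2 : ModOrd n m) {a b : MTerm n m} :
    wbltM o2 ↑a ↑b ↔ o2.ord.lt a b := by
  rw [wbltM_iff]
  constructor
  · rintro ⟨y, hy, h⟩
    obtain rfl : b = y := by injection hy
    exact h a rfl
  · intro h
    refine ⟨b, rfl, fun x hx => ?_⟩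
    obtain rfl : a = x := WithBot.coe_eq_coe.1 hx
    exact h

lemma wbleM_trans (o2 : ModOrd n m) {a b c : WithBot (MTerm n m)}
    (h1 : wbleM o2 a b) (h2 : wbleM o2 b c) : wbleM o2 a c := by
  rw [wbleM_iff] at h1 h2 ⊢
  intro x hx
  obtain ⟨y, hy, hxy⟩ := h1 x hx
  obtain ⟨z, hz, hyz⟩ := h2 y hy
  exact ⟨z, hz, o2.ord.le_trans _ _ _ hxy hyz⟩

lemma wbleM_of_lt (o2 : ModOrd n m) {a b : WithBot (MTerm n m)}
    (h : wbltM o2 a b) : wbleM o2 a b := by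
  rw [wbltM_iff] at h; rw [wbleM_iff]
  obtain ⟨y, hy, hlt⟩ := h
  intro x hx
  exact ⟨y, hy, @le_of_lt _ o2.ord.toPreorder _ _ (hlt x hx)⟩

lemma wbltM_of_le_of_lt (o2 : ModOrd n m) {a b c : WithBot (MTerm n m)}
    (h1 : wbleM o2 a b) (h2 : wbltM o2 b c) : wbltM o2 a c := by
  rw [wbleM_iff] at h1; rw [wbltM_iff] at h2 ⊢
  obtain ⟨z, hz, hlt⟩ := h2
  refine ⟨z, hz, fun x hx => ?_⟩
  obtain ⟨y, hy, hxy⟩ := h1 x hx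
  exact @lt_of_le_of_lt _ o2.ord.toPreorder _ _ _ hxy (hlt y hy)

lemma not_le_of_ltM (o2 : ModOrd n m) {a : WithBot (MTerm n m)} {S : MTerm n m}
    (h : wbltM o2 a ↑S) : ¬ wbleM o2 ↑S a := by
  intro hle
  rw [wbleM_iff] at hle; rw [wbltM_iff] at h
  obtain ⟨b, hb, hSb⟩ := hle S rfl
  obtain ⟨z, hz, hlt⟩ := h
  obtain rfl : S = z := by injection hz
  exact absurd (@lt_of_le_of_lt _ o2.ord.toPreorder _ _ _ hSb (hlt b hb))
    (@lt_irrefl _ o2.ord.toPreorder S)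

/-! ### `msupport`, `mcoeff`, `lppMW` -/

lemma mem_msupport_iff (u : ModElem K n m) (t : MTerm n m) :
    t ∈ msupport u ↔ mcoeff u t ≠ 0 := by
  unfold msupport mcoeff
  simp only [Finset.mem_biUnion, Finset.mem_univ, true_and, Finset.mem_image,
    MvPolynomial.mem_support_iff]
  constructor
  · rintro ⟨i, β, hβ, rfl⟩; exact hβ
  · intro h; exact ⟨t.2, t.1, h, rfl⟩

lemma le_lppMW_of_mcoeff (o2 : ModOrd n m) (u : ModElem K n m) {t : MTerm n m}
    (h : mcoeff u t ≠ 0) : wbleM o2 (↑t) (lppMW o2 u) :=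
  @Finset.le_max _ o2.ord _ _ ((mem_msupport_iff u t).2 h)

lemma mcoeff_eq_zero_of_lt (o2 : ModOrd n m) (u : ModElem K n m) {S : MTerm n m}
    (h : wbltM o2 (lppMW o2 u) ↑S) : mcoeff u S = 0 := by
  by_contra hc
  exact not_le_of_ltM o2 h (le_lppMW_of_mcoeff o2 u hc)

lemma mcoeff_ne_of_lppMW_coe (o2 : ModOrd n m) (u : ModElem K n m) {T : MTerm n m}
    (h : lppMW o2 u = ↑T) : mcoeff u T ≠ 0 :=
  (mem_msupport_iff u T).1 (@Finset.mem_of_max _ o2.ord _ _ h)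

lemma lppMW_le_of_forall (o2 : ModOrd n m) (u : ModElem K n m) {W : WithBot (MTerm n m)}
    (h : ∀ t, mcoeff u t ≠ 0 → wbleM o2 ↑t W) : wbleM o2 (lppMW o2 u) W := by
  rcases hM : lppMW o2 u with _ | T
  · exact wbleM_bot o2 W
  · exact h T ((mem_msupport_iff u T).1 (@Finset.mem_of_max _ o2.ord _ _ hM))

lemma lppMW_lt_of_forall (o2 : ModOrd n m) (u : ModElem K n m) {S : MTerm n m}
    (h : ∀ t, mcoeff u t ≠ 0 → o2.ord.lt t S) : wbltM o2 (lppMW o2 u) ↑S := by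
  rcases hM : lppMW o2 u with _ | T
  · exact wbltM_bot_coe o2 S
  · exact (wbltM_coe_coe o2).2
      (h T ((mem_msupport_iff u T).1 (@Finset.mem_of_max _ o2.ord _ _ hM)))

lemma mcoeff_add (a b : ModElem K n m) (t : MTerm n m) :
    mcoeff (fun k => a k + b k) t = mcoeff a t + mcoeff b t := by
  simp [mcoeff]

lemma lppMW_add_of_lt (o2 : ModOrd n m) (a b : ModElem K n m) (T : MTerm n m)
    (ha : lppMW o2 a = ↑T) (hb : wbltM o2 (lppMW o2 b) ↑T) :
    lppMW o2 (fun k => a k + b k) = ↑T ∧ mcoeff (fun k => a k + b k) T = mcoeff a T := by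
  have hbT : mcoeff b T = 0 := mcoeff_eq_zero_of_lt o2 b hb
  have hT : mcoeff (fun k => a k + b k) T = mcoeff a T := by
    rw [mcoeff_add, hbT, add_zero]
  have hle : wbleM o2 (lppMW o2 (fun k => a k + b k)) ↑T := by
    apply lppMW_le_of_forall
    intro t ht
    rw [mcoeff_add] at ht
    by_cases hat : mcoeff a t = 0
    · have hbt : mcoeff b t ≠ 0 := fun hz => ht (by rw [hat, hz, add_zero])
      exact wbleM_of_lt o2 (wbltM_of_le_of_lt o2 (le_lppMW_of_mcoeff o2 b hbt) hb)
    · have := le_lppMW_of_mcoeff o2 a hat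
      rw [ha] at this; exact this
  have hge : wbleM o2 (↑T : WithBot (MTerm n m)) (lppMW o2 (fun k => a k + b k)) := by
    apply le_lppMW_of_mcoeff
    rw [hT]
    exact mcoeff_ne_of_lppMW_coe o2 a ha
  constructor
  · -- antisymmetry by hand
    rw [wbleM_iff] at hge hle
    obtain ⟨b', hb', hTb⟩ := hge T rfl
    obtain ⟨c', hc', hbc⟩ := hle b' hb'
    obtain rfl : T = c' := by injection hc'
    have : b' = T := o2.ord.le_antisymm _ _ hbc hTb
    rw [hb', this]
  · exact hT

/-! ### polynomial side -/

lemma le_lppW_of_coeff (o1 : MonOrd n) (f : MvPolynomial (Fin n) K) {t : PP n}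
    (h : f.coeff t ≠ 0) : wbleP o1 ↑t (lppW o1 f) :=
  @Finset.le_max _ o1.ord _ _ (MvPolynomial.mem_support_iff.2 h)

lemma lppW_eq_coe (o1 : MonOrd n) (f : MvPolynomial (Fin n) K) (hf : f ≠ 0) :
    lppW o1 f = ↑(lpp o1 f) := by
  have hne : lppW o1 f ≠ ⊥ := by
    intro hb
    have : f.support = ∅ := @Finset.max_eq_bot _ o1.ord _ |>.1 hb
    exact hf (MvPolynomial.support_eq_empty.1 this)
  rcases h : lppW o1 f with _ | a
  · exact absurd h hne
  · unfold lpp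
    rw [h]
    rfl

lemma lc_ne_zero (o1 : MonOrd n) (f : MvPolynomial (Fin n) K) (hf : f ≠ 0) :
    lc o1 f ≠ 0 :=
  MvPolynomial.mem_support_iff.1 (@Finset.mem_of_max _ o1.ord _ _ (lppW_eq_coe o1 f hf))

lemma wbltP_bot_coe (o1 : MonOrd n) (b : PP n) : wbltP o1 ⊥ ↑b :=
  (wbltP_iff o1).2 ⟨b, rfl, fun x hx => nomatch hx⟩

lemma wbltP_coe_coe (o1 : MonOrd n) {a b : PP n} :
    wbltP o1 ↑a ↑b ↔ o1.ord.lt a b := by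
  rw [wbltP_iff]
  constructor
  · rintro ⟨y, hy, h⟩
    obtain rfl : b = y := by injection hy
    exact h a rfl
  · intro h
    refine ⟨b, rfl, fun x hx => ?_⟩
    obtain rfl : a = x := WithBot.coe_eq_coe.1 hx
    exact h

lemma lppW_lt_of_forall (o1 : MonOrd n) (f : MvPolynomial (Fin n) K) {S : PP n}
    (h : ∀ β, f.coeff β ≠ 0 → o1.ord.lt β S) : wbltP o1 (lppW o1 f) ↑S := by
  rcases hM : lppW o1 f with _ | T
  · exact wbltP_bot_coe o1 S
  · exact (wbltP_coe_coe o1).2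
      (h T (MvPolynomial.mem_support_iff.1 (@Finset.mem_of_max _ o1.ord _ _ hM)))

lemma o1_le_of_coeff (o1 : MonOrd n) (f : MvPolynomial (Fin n) K) (hf : f ≠ 0) {β : PP n}
    (h : f.coeff β ≠ 0) : o1.ord.le β (lpp o1 f) := by
  have h1 := le_lppW_of_coeff o1 f h
  rw [lppW_eq_coe o1 f hf, wbleP_iff] at h1
  obtain ⟨y, hy, hle⟩ := h1 β rfl
  obtain rfl : lpp o1 f = y := by injection hy
  exact hle

lemma o1_add_le (o1 : MonOrd n) (t : PP n) {a b : PP n} (h : o1.ord.le a b) :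
    o1.ord.le (t + a) (t + b) := by
  rcases @eq_or_lt_of_le _ o1.ord.toPartialOrder _ _ h with rfl | hlt
  · exact o1.ord.le_refl _
  · exact @le_of_lt _ o1.ord.toPreorder _ _ (o1.mul_lt t a b hlt)

lemma mono_mul_coeff_zero (o1 : MonOrd n) (t : PP n) (d : K) (q : MvPolynomial (Fin n) K)
    (hq : q ≠ 0) {β : PP n} (h : o1.ord.lt (t + lpp o1 q) β) :
    (monomial t d * q).coeff β = 0 := by
  rw [MvPolynomial.coeff_monomial_mul']
  split_ifs with hle
  · have hβ : t + (β - t) = β := by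
      rw [add_comm]; exact tsub_add_cancel_of_le hle
    have hz : q.coeff (β - t) = 0 := by
      by_contra hc
      have h2 := o1_add_le o1 t (o1_le_of_coeff o1 q hq hc)
      rw [hβ] at h2
      exact absurd h2 (@not_le_of_gt _ o1.ord.toPreorder _ _ h)
    rw [hz, mul_zero]
  · rfl

lemma lem_red (o1 : MonOrd n) (h gi : MvPolynomial (Fin n) K) (hh : h ≠ 0) (hgi : gi ≠ 0)
    (hle : lpp o1 gi ≤ lpp o1 h) :
    wbltP o1 (lppW o1 (h - monomial (lpp o1 h - lpp o1 gi) (lc o1 h / lc o1 gi) * gi))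
      (lppW o1 h) := by
  rw [lppW_eq_coe o1 h hh]
  have hsum : (lpp o1 h - lpp o1 gi) + lpp o1 gi = lpp o1 h := tsub_add_cancel_of_le hle
  apply lppW_lt_of_forall
  intro β hβ
  by_contra hnlt
  have hLβ : o1.ord.le (lpp o1 h) β := (@not_lt _ o1.ord _ _).1 hnlt
  have h1 : (monomial (lpp o1 h - lpp o1 gi) (lc o1 h / lc o1 gi) * gi).coeff
      ((lpp o1 h - lpp o1 gi) + lpp o1 gi) = lc o1 h := by
    rw [MvPolynomial.coeff_monomial_mul]
    exact div_mul_cancel₀ (lc o1 h) (lc_ne_zero o1 gi hgi)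
  rw [hsum] at h1
  rcases @eq_or_lt_of_le _ o1.ord.toPartialOrder _ _ hLβ with rfl | hlt
  · rw [MvPolynomial.coeff_sub, h1] at hβ
    exact hβ (sub_eq_zero_of_eq rfl)
  · have h2 : h.coeff β = 0 := by
      by_contra hc
      exact absurd (o1_le_of_coeff o1 h hh hc) (@not_le_of_gt _ o1.ord.toPreorder _ _ hlt)
    have h3 : (monomial (lpp o1 h - lpp o1 gi) (lc o1 h / lc o1 gi) * gi).coeff β = 0 := by
      apply mono_mul_coeff_zero o1 _ _ _ hgi
      rw [hsum]; exact hlt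
    rw [MvPolynomial.coeff_sub, h2, h3] at hβ
    exact hβ (sub_zero 0)

/-! ### misc module-element lemmas -/

lemma lppMW_pmul_zero (o2 : ModOrd n m) (u : ModElem K n m) :
    lppMW o2 (pmul (0 : MvPolynomial (Fin n) K) u) = ⊥ := by
  have hs : msupport (pmul (0 : MvPolynomial (Fin n) K) u) = ∅ := by
    ext t
    simp [mem_msupport_iff, mcoeff, pmul]
  unfold lppMW
  rw [hs]
  exact @Finset.max_empty _ o2.ord

lemma lppMW_pmul_monomial (o2 : ModOrd n m) (t : PP n) {d : K} (hd : d ≠ 0)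
    (u : ModElem K n m) :
    lppMW o2 (pmul (monomial t d) u) = lppMW o2 (smulPP t u) := by
  unfold lppMW
  congr 1
  ext T
  simp only [mem_msupport_iff, mcoeff, pmul, smulPP, MvPolynomial.coeff_monomial_mul']
  split_ifs with h
  · simp [hd]
  · simp

lemma mcoeff_termVec (α : PP n) (c : K) (j : Fin m) (T : MTerm n m) :
    mcoeff (termVec α c j) T = if T = (α, j) then c else 0 := by
  obtain ⟨β, k⟩ := T
  simp only [mcoeff, termVec]
  by_cases hk : k = j
  · subst hk
    simp [MvPolynomial.coeff_monomial, Prod.ext_iff, eq_comm]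
  · simp [hk, Prod.ext_iff]

lemma lppMW_termVec (o2 : ModOrd n m) (α : PP n) {c : K} (hc : c ≠ 0) (j : Fin m) :
    lppMW o2 (termVec α c j) = ↑((α, j) : MTerm n m) := by
  have hs : msupport (termVec α c j) = {((α, j) : MTerm n m)} := by
    ext T
    simp only [mem_msupport_iff, mcoeff_termVec, Finset.mem_singleton]
    split_ifs with h
    · simp [h, hc]
    · simp [h]
  unfold lppMW
  rw [hs]
  exact @Finset.max_singleton _ o2.ord _

/-! ### the representation lemma -/

lemma rep_exists (o1 : MonOrd n) (o2 : ModOrd n m) (F : Fin m → MvPolynomial (Fin n) K)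
    {s : ℕ} (g : Fin s → MvPolynomial (Fin n) K) (v : Fin s → ModElem K n m)
    (hG : IsFullLGB o1 o2 F g v) :
    ∀ (h : MvPolynomial (Fin n) K) (w : ModElem K n m), h = dotF w F →
      ∃ p : Fin s → MvPolynomial (Fin n) K, h = ∑ i, p i * g i ∧
        ∀ i, wbleM o2 (lppMW o2 (pmul (p i) (v i))) (lppMW o2 w) := by
  have hwf : WellFounded (fun a b : MvPolynomial (Fin n) K =>
      wbltP o1 (lppW o1 a) (lppW o1 b)) := by
    have hWB : WellFounded (fun a b : WithBot (PP n) => wbltP o1 a b) :=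
      (@WithBot.instWellFoundedLT (PP n) o1.ord.toLT ⟨o1.wf⟩).wf
    exact InvImage.wf (lppW o1) hWB
  intro h
  induction h using hwf.induction with
  | _ h IH =>
  intro w hw
  by_cases hh : h = 0
  · refine ⟨fun _ => 0, ?_, ?_⟩
    · simp [hh]
    · intro i
      rw [lppMW_pmul_zero o2 (v i)]
      exact wbleM_bot o2 _
  · obtain ⟨i, hgine, hdvd, hsig⟩ := hG.2 h w hw hh
    set t : PP n := lpp o1 h - lpp o1 (g i) with ht
    set d : K := lc o1 h / lc o1 (g i) with hdd
    have hd : d ≠ 0 := div_ne_zero (lc_ne_zero o1 h hh) (lc_ne_zero o1 (g i) hgine)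
    set h' : MvPolynomial (Fin n) K := h - monomial t d * g i with hh'
    set w' : ModElem K n m := fun k => w k - monomial t d * v i k with hw'
    have hrel : wbltP o1 (lppW o1 h') (lppW o1 h) := lem_red o1 h (g i) hh hgine hdvd
    have hweq : h' = dotF w' F := by
      have hstep : ∀ k ∈ Finset.univ, (w k - monomial t d * v i k) * F k
          = w k * F k - monomial t d * (v i k * F k) := by intros; ring
      have : dotF w' F = dotF w F - monomial t d * dotF (v i) F := by
        unfold dotF
        rw [Finset.sum_congr rfl hstep, Finset.sum_sub_distrib, Finset.mul_sum]
      rw [this, ← hG.1 i, ← hw]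
    obtain ⟨p', hp'1, hp'2⟩ := IH h' hrel w' hweq
    have hmono_eq : lppMW o2 (pmul (monomial t d) (v i)) = lppMW o2 (smulPP t (v i)) :=
      lppMW_pmul_monomial o2 t hd (v i)
    have hsig' : wbleM o2 (lppMW o2 (pmul (monomial t d) (v i))) (lppMW o2 w) := by
      rw [hmono_eq]; exact hsig
    have hw'le : wbleM o2 (lppMW o2 w') (lppMW o2 w) := by
      apply lppMW_le_of_forall
      intro T hT
      have hmc : mcoeff w' T = mcoeff w T - mcoeff (pmul (monomial t d) (v i)) T := by
        simp [hw', mcoeff, pmul]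
      by_cases hwT : mcoeff w T = 0
      · have : mcoeff (pmul (monomial t d) (v i)) T ≠ 0 := by
          intro hz; rw [hmc, hwT, hz, sub_zero] at hT; exact hT rfl
        exact wbleM_trans o2 (le_lppMW_of_mcoeff o2 _ this) hsig'
      · exact le_lppMW_of_mcoeff o2 w hwT
    refine ⟨fun k => p' k + if k = i then monomial t d else 0, ?_, ?_⟩
    · have hsum2 : ∑ k, (p' k + if k = i then monomial t d else 0) * g k
          = (∑ k, p' k * g k) + monomial t d * g i := by
        rw [Finset.sum_congr rfl (fun k _ => add_mul (p' k) _ (g k)),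
          Finset.sum_add_distrib]
        congr 1
        simp [ite_mul]
      rw [hsum2, ← hp'1, hh']
      ring
    · intro k
      by_cases hk : k = i
      · subst hk
        simp only [eq_self_iff_true, if_true]
        apply lppMW_le_of_forall
        intro T hT
        have hmc : mcoeff (pmul (p' k + monomial t d) (v k)) T
            = mcoeff (pmul (p' k) (v k)) T + mcoeff (pmul (monomial t d) (v k)) T := by
          simp [mcoeff, pmul, add_mul]
        by_cases h1 : mcoeff (pmul (p' k) (v k)) T = 0
        · have h2 : mcoeff (pmul (monomial t d) (v k)) T ≠ 0 := by
            intro hz; rw [hmc, h1, hz, add_zero] at hT; exact hT rfl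
          exact wbleM_trans o2 (le_lppMW_of_mcoeff o2 _ h2) hsig'
        · exact wbleM_trans o2 (le_lppMW_of_mcoeff o2 _ h1)
            (wbleM_trans o2 (hp'2 k) hw'le)
      · simp only [if_neg hk, add_zero]
        exact wbleM_trans o2 (hp'2 k) hw'le

end AuxLemmas


/-- (Proposition on building a full-labeled basis from a monomial-labeled one.)
If `G` is a full-labeled Gröbner basis for `I`, `c ≠ 0`, and `f = u·F` with `lm(u) = c·x^α e_j`,
then there are `p₁,…,p_s` with `f = c x^α f_j + ∑ pᵢ gᵢ` and `x^α e_j ≻ lpp(pᵢ vᵢ)` for all `i`;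
moreover for any such `pᵢ`'s, `u' = c x^α e_j + ∑ pᵢ vᵢ` satisfies `lm(u') = c x^α e_j` and
`f = u'·F`. -/
theorem detachability_stmt1 {K : Type*} [Field K] {n m : ℕ}
    (o1 : MonOrd n) (o2 : ModOrd n m) (F : Fin m → MvPolynomial (Fin n) K)
    {s : ℕ} (g : Fin s → MvPolynomial (Fin n) K) (v : Fin s → ModElem K n m)
    (hG : IsFullLGB o1 o2 F g v)
    (c : K) (hc : c ≠ 0) (α : PP n) (j : Fin m)
    (f : MvPolynomial (Fin n) K) (u : ModElem K n m)
    (hfu : f = dotF u F)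
    (hlppu : lppMW o2 u = (((α, j) : MTerm n m) : WithBot (MTerm n m)))
    (hlcu : mcoeff u (α, j) = c) :
    (∃ p : Fin s → MvPolynomial (Fin n) K,
      f = monomial α c * F j + ∑ i, p i * g i ∧
      ∀ i, wbltM o2 (lppMW o2 (pmul (p i) (v i)))
        (((α, j) : MTerm n m) : WithBot (MTerm n m))) ∧
    (∀ p : Fin s → MvPolynomial (Fin n) K,
      f = monomial α c * F j + ∑ i, p i * g i →
      (∀ i, wbltM o2 (lppMW o2 (pmul (p i) (v i)))
        (((α, j) : MTerm n m) : WithBot (MTerm n m))) →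
      (f = dotF (fun k => termVec α c j k + ∑ i, p i * v i k) F ∧
       lppMW o2 (fun k => termVec α c j k + ∑ i, p i * v i k) =
         (((α, j) : MTerm n m) : WithBot (MTerm n m)) ∧
       mcoeff (fun k => termVec α c j k + ∑ i, p i * v i k) (α, j) = c)) := by
  have hTV : ∑ k, termVec α c j k * F k = monomial α c * F j := by
    have : ∀ k ∈ Finset.univ, termVec α c j k * F k
        = if k = j then monomial α c * F k else 0 := by
      intro k _
      unfold termVec
      split_ifs <;> simp
    rw [Finset.sum_congr rfl this, Finset.sum_ite_eq' Finset.univ j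
      (fun k => monomial α c * F k), if_pos (Finset.mem_univ j)]
  -- the subtracted data
  have hd0 : f - monomial α c * F j = dotF (fun k => u k - termVec α c j k) F := by
    have hstep : ∀ k ∈ Finset.univ, (u k - termVec α c j k) * F k
        = u k * F k - termVec α c j k * F k := by intros; ring
    unfold dotF
    rw [Finset.sum_congr rfl hstep, Finset.sum_sub_distrib, hTV, ← dotF, ← hfu]
  have hw0lt : wbltM o2 (lppMW o2 (fun k => u k - termVec α c j k))
      ↑((α, j) : MTerm n m) := by
    apply lppMW_lt_of_forall
    intro T hT
    have hmc : mcoeff (fun k => u k - termVec α c j k) T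
        = mcoeff u T - mcoeff (termVec α c j) T := by simp [mcoeff]
    by_cases hTe : T = (α, j)
    · exfalso
      rw [hmc, hTe, hlcu, mcoeff_termVec, if_pos rfl, sub_self] at hT
      exact hT rfl
    · have h1 : mcoeff (termVec α c j) T = 0 := by
        rw [mcoeff_termVec, if_neg hTe]
      have h2 : mcoeff u T ≠ 0 := by
        rw [hmc, h1, sub_zero] at hT; exact hT
      have h3 := le_lppMW_of_mcoeff o2 u h2
      rw [hlppu] at h3
      have h4 : o2.ord.le T (α, j) := (wbleM_coe_coe o2).1 h3
      rcases @eq_or_lt_of_le _ o2.ord.toPartialOrder _ _ h4 with heq | hlt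
      · exact absurd heq hTe
      · exact hlt
  constructor
  · obtain ⟨p, hp1, hp2⟩ := rep_exists o1 o2 F g v hG
      (f - monomial α c * F j) (fun k => u k - termVec α c j k) hd0
    refine ⟨p, by rw [← hp1]; ring, fun i => wbltM_of_le_of_lt o2 (hp2 i) hw0lt⟩
  · intro p hf hlt
    -- rest term is strictly smaller
    have hrest : wbltM o2 (lppMW o2 (fun k => ∑ i, p i * v i k))
        ↑((α, j) : MTerm n m) := by
      apply lppMW_lt_of_forall
      intro T hT
      have hmc : mcoeff (fun k => ∑ i, p i * v i k) T
          = ∑ i, mcoeff (pmul (p i) (v i)) T := by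
        simp [mcoeff, pmul, MvPolynomial.coeff_sum]
      rw [hmc] at hT
      obtain ⟨i, -, hi⟩ := Finset.exists_ne_zero_of_sum_ne_zero hT
      have h3 := wbltM_of_le_of_lt o2 (le_lppMW_of_mcoeff o2 _ hi) (hlt i)
      exact (wbltM_coe_coe o2).1 h3
    have hadd := lppMW_add_of_lt o2 (termVec α c j) (fun k => ∑ i, p i * v i k)
      ((α, j) : MTerm n m) (lppMW_termVec o2 α hc j) hrest
    refine ⟨?_, hadd.1, ?_⟩
    · -- f = dotF u' F
      have e1 : dotF (fun k => termVec α c j k + ∑ i, p i * v i k) F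
          = (∑ k, termVec α c j k * F k) + ∑ k, (∑ i, p i * v i k) * F k := by
        unfold dotF
        rw [← Finset.sum_add_distrib]
        exact Finset.sum_congr rfl (by intros; ring)
      have e2 : ∑ k, (∑ i, p i * v i k) * F k = ∑ i, p i * g i := by
        have hstep : ∀ k ∈ Finset.univ, (∑ i, p i * v i k) * F k
            = ∑ i, p i * (v i k * F k) := by
          intro k _
          rw [Finset.sum_mul]
          exact Finset.sum_congr rfl (by intros; ring)
        rw [Finset.sum_congr rfl hstep, Finset.sum_comm]
        refine Finset.sum_congr rfl fun i _ => ?_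
        rw [hG.1 i]
        unfold dotF
        rw [Finset.mul_sum]
      rw [e1, e2, hTV, ← hf]
    · rw [hadd.2, mcoeff_termVec, if_pos rfl]
end

section
/- Let S = {g₁^(t₁),…,g_s^(t_s)} be a signature-labeled Gröbner basis for I, and let f ∈ R and the module term x^α e_j be such that there exists u ∈ R^m with f = u·F and lpp(u) = x^α e_j. Let g be an incomplete standard form of x^α e_j computed from f relative to S, and let g₀ be an incomplete standard form of x^α e_j computed from x^α·f_j relative to S. Set c := lc(g)/lc(g₀) if g ≠ 0 (in which case g₀ ≠ 0 automatically) and c := 1 if g = 0. Then there exists u' ∈ R^m with f = u'·F and lm(u') = c·x^α e_j. -/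
open MvPolynomial

/-- One step of the `IncompleteStandardForm` reduction relative to the signature-labeled set
`{gsᵢ^(tsᵢ)}` and the target signature `T`: replace a nonzero `h` by
`h − (lm(h)/lm(gsᵢ))·gsᵢ` where `lpp(gsᵢ) ∣ lpp(h)` and `(lpp(h)/lpp(gsᵢ))·tsᵢ ≺ T`. -/
inductive SigRedStep {K : Type*} [Field K] {n m : ℕ} (o1 : MonOrd n) (o2 : ModOrd n m)
    {s : ℕ} (gs : Fin s → MvPolynomial (Fin n) K) (ts : Fin s → MTerm n m) (T : MTerm n m) :
    MvPolynomial (Fin n) K → MvPolynomial (Fin n) K → Prop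
  | step (h : MvPolynomial (Fin n) K) (i : Fin s) (hh : h ≠ 0) (hgi : gs i ≠ 0)
      (hdvd : lpp o1 (gs i) ≤ lpp o1 h)
      (hsig : o2.ord.lt (mtmul (lpp o1 h - lpp o1 (gs i)) (ts i)) T) :
      SigRedStep o1 o2 gs ts T h
        (h - monomial (lpp o1 h - lpp o1 (gs i)) (lc o1 h / lc o1 (gs i)) * gs i)

/-- `g` is an incomplete standard form of `T` computed from `h` relative to `{gsᵢ^(tsᵢ)}`:
finitely many reduction steps lead from `h` to `g`, and `g` is either zero or irreducible. -/
def IsIncStdForm {K : Type*} [Field K] {n m : ℕ} (o1 : MonOrd n) (o2 : ModOrd n m)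
    {s : ℕ} (gs : Fin s → MvPolynomial (Fin n) K) (ts : Fin s → MTerm n m) (T : MTerm n m)
    (h g : MvPolynomial (Fin n) K) : Prop :=
  Relation.ReflTransGen (SigRedStep o1 o2 gs ts T) h g ∧
  (g = 0 ∨ ¬ ∃ i, gs i ≠ 0 ∧ lpp o1 (gs i) ≤ lpp o1 g ∧
      o2.ord.lt (mtmul (lpp o1 g - lpp o1 (gs i)) (ts i)) T)

namespace Stmt5

section Generic

variable {X : Type*} [lin : LinearOrder X]

lemma go_le_of_lt {a b : X} (h : lin.lt a b) : lin.le a b := le_of_lt h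
lemma go_le_refl (a : X) : lin.le a a := le_refl a
lemma go_le_antisymm {a b : X} (h1 : lin.le a b) (h2 : lin.le b a) : a = b := le_antisymm h1 h2
lemma go_lt_of_le_of_lt {a b c : X} (h1 : lin.le a b) (h2 : lin.lt b c) : lin.lt a c :=
  lt_of_le_of_lt h1 h2
lemma go_trichotomy (a b : X) : lin.lt a b ∨ a = b ∨ lin.lt b a := lt_trichotomy a b
lemma go_lt_or_eq_of_le {a b : X} (h : lin.le a b) : lin.lt a b ∨ a = b := lt_or_eq_of_le h
lemma go_lt_of_le_of_ne {a b : X} (h1 : lin.le a b) (h2 : a ≠ b) : lin.lt a b :=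
  lt_of_le_of_ne h1 h2
lemma go_not_le {a b : X} (h : lin.lt a b) : ¬ lin.le b a := not_le_of_gt h
lemma go_lt_irrefl (a : X) : ¬ lin.lt a a := lt_irrefl a
lemma go_lt_asymm {a b : X} (h : lin.lt a b) : ¬ lin.lt b a := fun h' => lt_asymm h h'

lemma go_max_le_coe_iff (s : Finset X) (a : X) :
    s.max ≤ (a : WithBot X) ↔ ∀ b ∈ s, lin.le b a := by
  rw [Finset.max_le_iff]
  exact ⟨fun h b hb => WithBot.coe_le_coe.mp (h b hb),
    fun h b hb => WithBot.coe_le_coe.mpr (h b hb)⟩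

lemma go_max_lt_coe_iff (s : Finset X) (a : X) :
    s.max < (a : WithBot X) ↔ ∀ b ∈ s, lin.lt b a := by
  constructor
  · intro h b hb
    exact WithBot.coe_lt_coe.mp (lt_of_le_of_lt (Finset.le_max hb) h)
  · intro h
    cases hm : s.max with
    | bot => exact WithBot.bot_lt_coe a
    | coe b => exact WithBot.coe_lt_coe.mpr (h b (Finset.mem_of_max hm))

lemma go_max_eq_coe_iff (s : Finset X) (a : X) :
    s.max = (a : WithBot X) ↔ a ∈ s ∧ ∀ b ∈ s, lin.le b a := by
  constructor
  · intro h
    exact ⟨Finset.mem_of_max h, fun b hb => Finset.le_max_of_eq hb h⟩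
  · rintro ⟨h1, h2⟩
    refine le_antisymm ((go_max_le_coe_iff s a).mpr h2) (Finset.le_max h1)

lemma go_exists_max (s : Finset X) (hs : s.Nonempty) : ∃ b : X, s.max = (b : WithBot X) :=
  Finset.max_of_nonempty hs

lemma go_coe_lt_coe_of_le_of_lt {w : WithBot X} {a b : X}
    (h1 : (a : WithBot X) ≤ w) (h2 : w < (b : WithBot X)) : lin.lt a b :=
  WithBot.coe_lt_coe.mp (lt_of_le_of_lt h1 h2)

end Generic

variable {K : Type*} [Field K] {n m : ℕ}

lemma mem_msupport {u : ModElem K n m} {t : MTerm n m} :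
    t ∈ msupport u ↔ mcoeff u t ≠ 0 := by
  obtain ⟨β, i⟩ := t
  simp only [msupport, Finset.mem_biUnion, Finset.mem_image, Finset.mem_univ, true_and,
    mcoeff, MvPolynomial.mem_support_iff]
  constructor
  · rintro ⟨i', a, ha, hai⟩
    obtain ⟨rfl, rfl⟩ : a = β ∧ i' = i := ⟨congrArg Prod.fst hai, congrArg Prod.snd hai⟩
    exact ha
  · intro h
    exact ⟨i, β, h, rfl⟩

lemma lppMW_le_coe (o2 : ModOrd n m) {u : ModElem K n m} {T : MTerm n m} :
    wbleM o2 (lppMW o2 u) (T : WithBot (MTerm n m)) ↔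
      ∀ t, mcoeff u t ≠ 0 → o2.ord.le t T := by
  have h := go_max_le_coe_iff (lin := o2.ord) (msupport u) T
  constructor
  · intro hh t ht
    exact h.mp hh t (mem_msupport.mpr ht)
  · intro hh
    exact h.mpr fun t ht => hh t (mem_msupport.mp ht)

lemma lppMW_lt_coe (o2 : ModOrd n m) {u : ModElem K n m} {T : MTerm n m} :
    wbltM o2 (lppMW o2 u) (T : WithBot (MTerm n m)) ↔
      ∀ t, mcoeff u t ≠ 0 → o2.ord.lt t T := by
  have h := go_max_lt_coe_iff (lin := o2.ord) (msupport u) T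
  constructor
  · intro hh t ht
    exact h.mp hh t (mem_msupport.mpr ht)
  · intro hh
    exact h.mpr fun t ht => hh t (mem_msupport.mp ht)

lemma lppMW_eq_coe (o2 : ModOrd n m) {u : ModElem K n m} {T : MTerm n m} :
    lppMW o2 u = (T : WithBot (MTerm n m)) ↔
      mcoeff u T ≠ 0 ∧ ∀ t, mcoeff u t ≠ 0 → o2.ord.le t T := by
  have h := go_max_eq_coe_iff (lin := o2.ord) (msupport u) T
  constructor
  · intro hh
    obtain ⟨h1, h2⟩ := h.mp hh
    exact ⟨mem_msupport.mp h1, fun t ht => h2 t (mem_msupport.mpr ht)⟩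
  · rintro ⟨h1, h2⟩
    exact h.mpr ⟨mem_msupport.mpr h1, fun t ht => h2 t (mem_msupport.mp ht)⟩

lemma lpp_spec (o1 : MonOrd n) {f : MvPolynomial (Fin n) K} (hf : f ≠ 0) :
    f.coeff (lpp o1 f) ≠ 0 ∧ ∀ β, f.coeff β ≠ 0 → o1.ord.le β (lpp o1 f) := by
  have hsupp : f.support.Nonempty := MvPolynomial.support_nonempty.mpr hf
  obtain ⟨b, hb⟩ := go_exists_max (lin := o1.ord) f.support hsupp
  obtain ⟨hb1, hb2⟩ := (go_max_eq_coe_iff (lin := o1.ord) f.support b).mp hb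
  have hlb : lppW o1 f = (b : WithBot (PP n)) := hb
  have hlpp : lpp o1 f = b := by
    show (lppW o1 f).unbotD 0 = b
    rw [hlb, WithBot.unbotD_coe]
  rw [hlpp]
  exact ⟨MvPolynomial.mem_support_iff.mp hb1,
    fun β hβ => hb2 β (MvPolynomial.mem_support_iff.mpr hβ)⟩

lemma lpp_eq (o1 : MonOrd n) {f : MvPolynomial (Fin n) K} {γ : PP n}
    (h1 : f.coeff γ ≠ 0) (h2 : ∀ β, f.coeff β ≠ 0 → o1.ord.le β γ) :
    lpp o1 f = γ := by
  have hf : f ≠ 0 := fun h => h1 (by simp [h])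
  obtain ⟨hc, hb⟩ := lpp_spec o1 hf
  exact go_le_antisymm (lin := o1.ord) (h2 _ hc) (hb _ h1)

lemma dotF_sub (x y : ModElem K n m) (F : Fin m → MvPolynomial (Fin n) K) :
    dotF (fun k => x k - y k) F = dotF x F - dotF y F := by
  simp [dotF, sub_mul, Finset.sum_sub_distrib]

lemma dotF_add (x y : ModElem K n m) (F : Fin m → MvPolynomial (Fin n) K) :
    dotF (fun k => x k + y k) F = dotF x F + dotF y F := by
  simp [dotF, add_mul, Finset.sum_add_distrib]

lemma dotF_pmul (p : MvPolynomial (Fin n) K) (u : ModElem K n m)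
    (F : Fin m → MvPolynomial (Fin n) K) :
    dotF (fun k => p * u k) F = p * dotF u F := by
  simp [dotF, Finset.mul_sum, mul_assoc]

lemma dotF_termVec (α : PP n) (c : K) (j : Fin m) (F : Fin m → MvPolynomial (Fin n) K) :
    dotF (termVec α c j) F = MvPolynomial.monomial α c * F j := by
  rw [dotF, Finset.sum_eq_single j]
  · simp [termVec]
  · intro k _ hk; simp [termVec, hk]
  · simp

lemma mcoeff_sub (x y : ModElem K n m) (t : MTerm n m) :
    mcoeff (fun k => x k - y k) t = mcoeff x t - mcoeff y t := by
  simp [mcoeff]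

lemma mcoeff_add (x y : ModElem K n m) (t : MTerm n m) :
    mcoeff (fun k => x k + y k) t = mcoeff x t + mcoeff y t := by
  simp [mcoeff]

lemma mcoeff_C_mul (c : K) (u : ModElem K n m) (t : MTerm n m) :
    mcoeff (fun k => MvPolynomial.C c * u k) t = c * mcoeff u t := by
  simp [mcoeff]

lemma mcoeff_monomial_mul (δ : PP n) (c : K) (u : ModElem K n m) {t : MTerm n m}
    (ht : mcoeff (fun k => MvPolynomial.monomial δ c * u k) t ≠ 0) :
    ∃ t', t = mtmul δ t' ∧ mcoeff u t' ≠ 0 := by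
  obtain ⟨β, i⟩ := t
  have ht' : (MvPolynomial.monomial δ c * u i).coeff β ≠ 0 := ht
  rw [MvPolynomial.coeff_monomial_mul'] at ht'
  by_cases hle : δ ≤ β
  · rw [if_pos hle] at ht'
    refine ⟨(β - δ, i), ?_, ?_⟩
    · have h : δ + (β - δ) = β := add_tsub_cancel_of_le hle
      simp [mtmul, h]
    · intro h
      have h' : (u i).coeff (β - δ) = 0 := h
      rw [h', mul_zero] at ht'
      exact ht' rfl
  · rw [if_neg hle] at ht'
    exact absurd rfl ht'

lemma mcoeff_smulPP_mtmul (δ : PP n) (u : ModElem K n m) (t : MTerm n m) :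
    mcoeff (smulPP δ u) (mtmul δ t) = mcoeff u t := by
  simp [mcoeff, smulPP, mtmul, MvPolynomial.coeff_monomial_mul]

lemma mtmul_le (o2 : ModOrd n m) (δ : PP n) {a b : MTerm n m} (h : o2.ord.le a b) :
    o2.ord.le (mtmul δ a) (mtmul δ b) := by
  rcases go_lt_or_eq_of_le (lin := o2.ord) h with h | rfl
  · exact go_le_of_lt (lin := o2.ord) (o2.mul_lt δ a b h)
  · exact go_le_refl (lin := o2.ord) _

lemma lppMW_smulPP (o2 : ModOrd n m) (δ : PP n) {u : ModElem K n m} {T : MTerm n m}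
    (h : lppMW o2 u = (T : WithBot (MTerm n m))) :
    lppMW o2 (smulPP δ u) = ((mtmul δ T : MTerm n m) : WithBot (MTerm n m)) := by
  obtain ⟨h1, h2⟩ := (lppMW_eq_coe o2).mp h
  refine (lppMW_eq_coe o2).mpr ⟨?_, ?_⟩
  · rw [mcoeff_smulPP_mtmul]; exact h1
  · intro t ht
    obtain ⟨t', rfl, ht'⟩ := mcoeff_monomial_mul δ 1 u ht
    exact mtmul_le o2 δ (h2 t' ht')

lemma reducible (o1 : MonOrd n) (o2 : ModOrd n m) (F : Fin m → MvPolynomial (Fin n) K)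
    {s : ℕ} {gs : Fin s → MvPolynomial (Fin n) K} {ts : Fin s → MTerm n m}
    {v : Fin s → ModElem K n m}
    (hv : ∀ i, lppMW o2 (v i) = ((ts i : MTerm n m) : WithBot (MTerm n m)))
    (hfull : IsFullLGB o1 o2 F gs v) (T : MTerm n m)
    {p : MvPolynomial (Fin n) K} {z : ModElem K n m}
    (hz : p = dotF z F) (hp : p ≠ 0)
    (hzlt : ∀ t, mcoeff z t ≠ 0 → o2.ord.lt t T) :
    ∃ i, gs i ≠ 0 ∧ lpp o1 (gs i) ≤ lpp o1 p ∧
      o2.ord.lt (mtmul (lpp o1 p - lpp o1 (gs i)) (ts i)) T := by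
  obtain ⟨i, hgi, hdvd, hsig⟩ := hfull.2 p z hz hp
  refine ⟨i, hgi, hdvd, ?_⟩
  have h1 : lppMW o2 (smulPP (lpp o1 p - lpp o1 (gs i)) (v i)) =
      ((mtmul (lpp o1 p - lpp o1 (gs i)) (ts i) : MTerm n m) : WithBot (MTerm n m)) :=
    lppMW_smulPP o2 _ (hv i)
  have h2 : wbltM o2 (lppMW o2 z) (T : WithBot (MTerm n m)) := (lppMW_lt_coe o2).mpr hzlt
  rw [h1] at hsig
  exact go_coe_lt_coe_of_le_of_lt (lin := o2.ord) hsig h2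

lemma red_label (o1 : MonOrd n) (o2 : ModOrd n m) (F : Fin m → MvPolynomial (Fin n) K)
    {s : ℕ} {gs : Fin s → MvPolynomial (Fin n) K} {ts : Fin s → MTerm n m}
    (T : MTerm n m) {v : Fin s → ModElem K n m}
    (hgv : ∀ i, gs i = dotF (v i) F)
    (hv : ∀ i, lppMW o2 (v i) = ((ts i : MTerm n m) : WithBot (MTerm n m)))
    {h g : MvPolynomial (Fin n) K}
    (hred : Relation.ReflTransGen (SigRedStep o1 o2 gs ts T) h g) :
    ∃ d : ModElem K n m, dotF d F = h - g ∧ ∀ t, mcoeff d t ≠ 0 → o2.ord.lt t T := by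
  induction hred with
  | refl =>
    refine ⟨fun _ => 0, by simp [dotF], fun t ht => ?_⟩
    simp [mcoeff] at ht
  | tail hd stp ih =>
    obtain ⟨d, hdF, hdlt⟩ := ih
    cases stp with
    | step i hh hgi hdvd hsig =>
      rename_i b
      refine ⟨fun k => d k +
        MvPolynomial.monomial (lpp o1 b - lpp o1 (gs i)) (lc o1 b / lc o1 (gs i)) * v i k,
        ?_, ?_⟩
      · rw [dotF_add, dotF_pmul, hdF, ← hgv i]
        ring
      · intro t ht
        rw [mcoeff_add] at ht
        by_cases h1 : mcoeff d t ≠ 0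
        · exact hdlt t h1
        · push_neg at h1
          rw [h1, zero_add] at ht
          obtain ⟨t', rfl, ht'⟩ := mcoeff_monomial_mul _ _ _ ht
          have hle : o2.ord.le t' (ts i) := ((lppMW_eq_coe o2).mp (hv i)).2 t' ht'
          exact go_lt_of_le_of_lt (lin := o2.ord) (mtmul_le o2 _ hle) hsig

end Stmt5

open Classical in
/-- With `g`, `g₀` incomplete standard forms of `x^α e_j` computed from `f`
resp. `x^α f_j`, and `c := lc(g)/lc(g₀)` if `g ≠ 0`, `c := 1` otherwise, there exists `u'`
with `f = u'·F` and `lm(u') = c·x^α e_j`. -/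
theorem detachability_stmt5 {K : Type*} [Field K] {n m : ℕ}
    (o1 : MonOrd n) (o2 : ModOrd n m) (F : Fin m → MvPolynomial (Fin n) K)
    {s : ℕ} (gs : Fin s → MvPolynomial (Fin n) K) (ts : Fin s → MTerm n m)
    (hS : IsSigLGB o1 o2 F gs ts)
    (f : MvPolynomial (Fin n) K) (α : PP n) (j : Fin m) (u : ModElem K n m)
    (hfu : f = dotF u F)
    (hlppu : lppMW o2 u = (((α, j) : MTerm n m) : WithBot (MTerm n m)))
    (g g₀ : MvPolynomial (Fin n) K)
    (hg : IsIncStdForm o1 o2 gs ts (α, j) f g)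
    (hg0 : IsIncStdForm o1 o2 gs ts (α, j) (monomial α (1 : K) * F j) g₀) :
    ∃ u' : ModElem K n m, f = dotF u' F ∧
      lppMW o2 u' = (((α, j) : MTerm n m) : WithBot (MTerm n m)) ∧
      mcoeff u' (α, j) = (if g = 0 then 1 else lc o1 g / lc o1 g₀) := by
  obtain ⟨v, hv, hfull⟩ := hS
  obtain ⟨huT, hule⟩ := (Stmt5.lppMW_eq_coe o2).mp hlppu
  -- label for g
  obtain ⟨d, hdF, hdlt⟩ := Stmt5.red_label o1 o2 F ((α, j) : MTerm n m) hfull.1 hv hg.1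
  have hwF : g = dotF (fun k => u k - d k) F := by
    rw [Stmt5.dotF_sub, hdF, ← hfu]; ring
  have hdT : mcoeff d ((α, j) : MTerm n m) = 0 := by
    by_contra hc
    exact Stmt5.go_lt_irrefl (lin := o2.ord) _ (hdlt _ hc)
  have hwT : mcoeff (fun k => u k - d k) ((α, j) : MTerm n m) = mcoeff u ((α, j) : MTerm n m) := by
    rw [Stmt5.mcoeff_sub, hdT, sub_zero]
  have hwle : ∀ t, mcoeff (fun k => u k - d k) t ≠ 0 → o2.ord.le t ((α, j) : MTerm n m) := by
    intro t ht
    rw [Stmt5.mcoeff_sub] at ht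
    by_cases h1 : mcoeff u t ≠ 0
    · exact hule t h1
    · push_neg at h1
      rw [h1, zero_sub, neg_ne_zero] at ht
      exact Stmt5.go_le_of_lt (lin := o2.ord) (hdlt t ht)
  have haNe : mcoeff u ((α, j) : MTerm n m) ≠ 0 := huT
  by_cases hgz : g = 0
  · -- case g = 0
    have hwF0 : dotF (fun k => u k - d k) F = 0 := by rw [← hwF, hgz]
    have hcoef : mcoeff (fun k => u k +
        C ((1 - mcoeff u ((α, j) : MTerm n m)) / mcoeff u ((α, j) : MTerm n m)) * (u k - d k))
        ((α, j) : MTerm n m) = 1 := by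
      rw [Stmt5.mcoeff_add, Stmt5.mcoeff_C_mul, hwT, div_mul_cancel₀ _ haNe]
      ring
    refine ⟨fun k => u k +
      C ((1 - mcoeff u ((α, j) : MTerm n m)) / mcoeff u ((α, j) : MTerm n m)) * (u k - d k),
      ?_, ?_, ?_⟩
    · rw [Stmt5.dotF_add, Stmt5.dotF_pmul, hwF0, mul_zero, add_zero]
      exact hfu
    · refine (Stmt5.lppMW_eq_coe o2).mpr ⟨?_, ?_⟩
      · rw [hcoef]; exact one_ne_zero
      · intro t ht
        rw [Stmt5.mcoeff_add, Stmt5.mcoeff_C_mul] at ht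
        by_cases h1 : mcoeff u t ≠ 0
        · exact hule t h1
        · push_neg at h1
          rw [h1, zero_add] at ht
          refine hwle t fun h => ?_
          rw [h, mul_zero] at ht
          exact ht rfl
    · rw [if_pos hgz]
      exact hcoef
  · -- case g ≠ 0
    refine ⟨u, hfu, hlppu, ?_⟩
    rw [if_neg hgz]
    have hgirr : ¬ ∃ i, gs i ≠ 0 ∧ lpp o1 (gs i) ≤ lpp o1 g ∧
        o2.ord.lt (mtmul (lpp o1 g - lpp o1 (gs i)) (ts i)) ((α, j) : MTerm n m) :=
      hg.2.resolve_left hgz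
    -- label for g₀
    obtain ⟨d0, hd0F, hd0lt⟩ := Stmt5.red_label o1 o2 F ((α, j) : MTerm n m) hfull.1 hv hg0.1
    have hw0F : g₀ = dotF (fun k => termVec α (1:K) j k - d0 k) F := by
      rw [Stmt5.dotF_sub, hd0F, Stmt5.dotF_termVec]; ring
    have htvT : mcoeff (termVec α (1:K) j) ((α, j) : MTerm n m) = 1 := by
      simp [mcoeff, termVec, MvPolynomial.coeff_monomial]
    have htv0 : ∀ t, mcoeff (termVec α (1:K) j) t ≠ 0 → t = ((α, j) : MTerm n m) := by
      rintro ⟨β, i⟩ ht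
      have ht' : ((if i = j then MvPolynomial.monomial α (1:K) else 0)).coeff β ≠ 0 := ht
      by_cases hij : i = j
      · subst hij
        rw [if_pos rfl, MvPolynomial.coeff_monomial] at ht'
        by_cases hβ : α = β
        · rw [hβ]
        · rw [if_neg hβ] at ht'
          exact absurd rfl ht'
      · rw [if_neg hij] at ht'
        simp at ht'
    have hd0T : mcoeff d0 ((α, j) : MTerm n m) = 0 := by
      by_contra hc
      exact Stmt5.go_lt_irrefl (lin := o2.ord) _ (hd0lt _ hc)
    have hw0T : mcoeff (fun k => termVec α (1:K) j k - d0 k) ((α, j) : MTerm n m) = 1 := by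
      rw [Stmt5.mcoeff_sub, htvT, hd0T, sub_zero]
    have hw0le : ∀ t, mcoeff (fun k => termVec α (1:K) j k - d0 k) t ≠ 0 →
        o2.ord.le t ((α, j) : MTerm n m) := by
      intro t ht
      rw [Stmt5.mcoeff_sub] at ht
      by_cases h1 : mcoeff (termVec α (1:K) j) t ≠ 0
      · rw [htv0 t h1]
        exact Stmt5.go_le_refl (lin := o2.ord) _
      · push_neg at h1
        rw [h1, zero_sub, neg_ne_zero] at ht
        exact Stmt5.go_le_of_lt (lin := o2.ord) (hd0lt t ht)
    -- the polynomial p := g - C a * g₀ and its label z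
    have hpz : g - C (mcoeff u ((α, j) : MTerm n m)) * g₀ =
        dotF (fun k => (u k - d k) -
          C (mcoeff u ((α, j) : MTerm n m)) * (termVec α (1:K) j k - d0 k)) F := by
      rw [Stmt5.dotF_sub, Stmt5.dotF_pmul, ← hwF, ← hw0F]
    have hzT : mcoeff (fun k => (u k - d k) -
        C (mcoeff u ((α, j) : MTerm n m)) * (termVec α (1:K) j k - d0 k))
        ((α, j) : MTerm n m) = 0 := by
      rw [Stmt5.mcoeff_sub, Stmt5.mcoeff_C_mul, hwT, hw0T]
      ring
    have hzlt : ∀ t, mcoeff (fun k => (u k - d k) -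
        C (mcoeff u ((α, j) : MTerm n m)) * (termVec α (1:K) j k - d0 k)) t ≠ 0 →
        o2.ord.lt t ((α, j) : MTerm n m) := by
      intro t ht
      have hle : o2.ord.le t ((α, j) : MTerm n m) := by
        have ht' := ht
        rw [Stmt5.mcoeff_sub, Stmt5.mcoeff_C_mul] at ht'
        by_cases h1 : mcoeff (fun k => u k - d k) t ≠ 0
        · exact hwle t h1
        · push_neg at h1
          rw [h1, zero_sub, neg_ne_zero] at ht'
          refine hw0le t fun h => ?_
          rw [h, mul_zero] at ht'
          exact ht' rfl
      refine Stmt5.go_lt_of_le_of_ne (lin := o2.ord) hle fun hts => ?_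
      rw [hts] at ht
      exact ht hzT
    have hcoeffp : ∀ γ, (g - C (mcoeff u ((α, j) : MTerm n m)) * g₀).coeff γ =
        g.coeff γ - mcoeff u ((α, j) : MTerm n m) * g₀.coeff γ := by
      intro γ
      rw [MvPolynomial.coeff_sub, MvPolynomial.coeff_C_mul]
    obtain ⟨hlcg, hgle⟩ := Stmt5.lpp_spec o1 hgz
    -- g₀ ≠ 0
    have hg0ne : g₀ ≠ 0 := by
      intro h0
      have hp : g - C (mcoeff u ((α, j) : MTerm n m)) * g₀ = g := by
        rw [h0, mul_zero, sub_zero]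
      rw [hp] at hpz
      obtain ⟨i, hgi, hdvd, hltT⟩ :=
        Stmt5.reducible o1 o2 F hv hfull ((α, j) : MTerm n m) hpz hgz hzlt
      exact hgirr ⟨i, hgi, hdvd, hltT⟩
    obtain ⟨hlcg0, hg0le⟩ := Stmt5.lpp_spec o1 hg0ne
    have hg0irr : ¬ ∃ i, gs i ≠ 0 ∧ lpp o1 (gs i) ≤ lpp o1 g₀ ∧
        o2.ord.lt (mtmul (lpp o1 g₀ - lpp o1 (gs i)) (ts i)) ((α, j) : MTerm n m) :=
      hg0.2.resolve_left hg0ne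
    have hlc0 : lc o1 g₀ ≠ 0 := hlcg0
    rw [eq_div_iff hlc0]
    -- main trichotomy
    rcases Stmt5.go_trichotomy (lin := o1.ord) (lpp o1 g) (lpp o1 g₀) with hlt | heq | hlt
    · exfalso
      have hcg : g.coeff (lpp o1 g₀) = 0 := by
        by_contra hc
        exact Stmt5.go_not_le (lin := o1.ord) hlt (hgle _ hc)
      have hne : (g - C (mcoeff u ((α, j) : MTerm n m)) * g₀).coeff (lpp o1 g₀) ≠ 0 := by
        rw [hcoeffp, hcg, zero_sub, neg_ne_zero]
        exact mul_ne_zero haNe hlcg0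
      have hpne : g - C (mcoeff u ((α, j) : MTerm n m)) * g₀ ≠ 0 := fun h => hne (by simp [h])
      have hlppp : lpp o1 (g - C (mcoeff u ((α, j) : MTerm n m)) * g₀) = lpp o1 g₀ := by
        refine Stmt5.lpp_eq o1 hne ?_
        intro β hβ
        rw [hcoeffp] at hβ
        have hor : g.coeff β ≠ 0 ∨ g₀.coeff β ≠ 0 := by
          by_contra hno
          push_neg at hno
          rw [hno.1, hno.2, mul_zero, sub_zero] at hβ
          exact hβ rfl
        rcases hor with hb | hb
        · exact Stmt5.go_le_of_lt (lin := o1.ord)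
            (Stmt5.go_lt_of_le_of_lt (lin := o1.ord) (hgle _ hb) hlt)
        · exact hg0le _ hb
      obtain ⟨i, hgi, hdvd, hltT⟩ :=
        Stmt5.reducible o1 o2 F hv hfull ((α, j) : MTerm n m) hpz hpne hzlt
      rw [hlppp] at hdvd hltT
      exact hg0irr ⟨i, hgi, hdvd, hltT⟩
    · -- lpp g = lpp g₀
      by_cases hlc : g.coeff (lpp o1 g) = mcoeff u ((α, j) : MTerm n m) * g₀.coeff (lpp o1 g)
      · have h1 : lc o1 g₀ = g₀.coeff (lpp o1 g) := by
          show g₀.coeff (lpp o1 g₀) = _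
          rw [heq]
        rw [h1, ← hlc]
        rfl
      · exfalso
        have hne : (g - C (mcoeff u ((α, j) : MTerm n m)) * g₀).coeff (lpp o1 g) ≠ 0 := by
          rw [hcoeffp]
          exact sub_ne_zero.mpr hlc
        have hpne : g - C (mcoeff u ((α, j) : MTerm n m)) * g₀ ≠ 0 := fun h => hne (by simp [h])
        have hlppp : lpp o1 (g - C (mcoeff u ((α, j) : MTerm n m)) * g₀) = lpp o1 g := by
          refine Stmt5.lpp_eq o1 hne ?_
          intro β hβ
          rw [hcoeffp] at hβ
          have hor : g.coeff β ≠ 0 ∨ g₀.coeff β ≠ 0 := by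
            by_contra hno
            push_neg at hno
            rw [hno.1, hno.2, mul_zero, sub_zero] at hβ
            exact hβ rfl
          rcases hor with hb | hb
          · exact hgle _ hb
          · rw [← heq] at hg0le
            exact hg0le _ hb
        obtain ⟨i, hgi, hdvd, hltT⟩ :=
          Stmt5.reducible o1 o2 F hv hfull ((α, j) : MTerm n m) hpz hpne hzlt
        rw [hlppp] at hdvd hltT
        exact hgirr ⟨i, hgi, hdvd, hltT⟩
    · exfalso
      have hcg0 : g₀.coeff (lpp o1 g) = 0 := by
        by_contra hc
        exact Stmt5.go_not_le (lin := o1.ord) hlt (hg0le _ hc)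
      have hne : (g - C (mcoeff u ((α, j) : MTerm n m)) * g₀).coeff (lpp o1 g) ≠ 0 := by
        rw [hcoeffp, hcg0, mul_zero, sub_zero]
        exact hlcg
      have hpne : g - C (mcoeff u ((α, j) : MTerm n m)) * g₀ ≠ 0 := fun h => hne (by simp [h])
      have hlppp : lpp o1 (g - C (mcoeff u ((α, j) : MTerm n m)) * g₀) = lpp o1 g := by
        refine Stmt5.lpp_eq o1 hne ?_
        intro β hβ
        rw [hcoeffp] at hβ
        have hor : g.coeff β ≠ 0 ∨ g₀.coeff β ≠ 0 := by
          by_contra hno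
          push_neg at hno
          rw [hno.1, hno.2, mul_zero, sub_zero] at hβ
          exact hβ rfl
        rcases hor with hb | hb
        · exact hgle _ hb
        · exact Stmt5.go_le_of_lt (lin := o1.ord)
            (Stmt5.go_lt_of_le_of_lt (lin := o1.ord) (hg0le _ hb) hlt)
      obtain ⟨i, hgi, hdvd, hltT⟩ :=
        Stmt5.reducible o1 o2 F hv hfull ((α, j) : MTerm n m) hpz hpne hzlt
      rw [hlppp] at hdvd hltT
      exact hgirr ⟨i, hgi, hdvd, hltT⟩
end

section
/- Let B be a set of admissible labeled polynomials and f^(x^α e_i) an admissible labeled polynomial. Suppose h ∈ R is obtained from f by a finite sequence of one-step F5-reductions by B, where each step replaces the current polynomial h' by h' − c·t·g for some admissible g^(x^β e_j) ∈ B with g ≠ 0, lpp(g) dividing lpp(h'), t = lpp(h')/lpp(g), c = lc(h')/lc(g), and x^α e_i ≻₂ t·x^β e_j. Then h^(x^α e_i) is an admissible labeled polynomial, i.e. there exists w ∈ R^m with h = w·F and lpp(w) = x^α e_i. -/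
open MvPolynomial

/-- One step of F5-reduction of a polynomial by the set `B` of admissible labeled polynomials,
relative to the signature `T` of the polynomial being reduced: a nonzero `h` is replaced by
`h − c·t·g` where `(g, (β,j)) ∈ B`, `g ≠ 0`, `lpp(g) ∣ lpp(h)`, `t = lpp(h)/lpp(g)`,
`c = lc(h)/lc(g)`, and `T ≻₂ t·(β,j)`. -/
inductive F5Red {K : Type*} [Field K] {n m : ℕ} (o1 : MonOrd n) (o2 : ModOrd n m)
    (B : Set (MvPolynomial (Fin n) K × MTerm n m)) (T : MTerm n m) :
    MvPolynomial (Fin n) K → MvPolynomial (Fin n) K → Prop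
  | step (h : MvPolynomial (Fin n) K) (q : MvPolynomial (Fin n) K × MTerm n m)
      (hq : q ∈ B) (hq0 : q.1 ≠ 0) (hh : h ≠ 0)
      (hdvd : lpp o1 q.1 ≤ lpp o1 h)
      (hsig : o2.ord.lt (mtmul (lpp o1 h - lpp o1 q.1) q.2) T) :
      F5Red o1 o2 B T h (h - monomial (lpp o1 h - lpp o1 q.1) (lc o1 h / lc o1 q.1) * q.1)

section AbstractAux
variable {α : Type*} [LinearOrder α]

/-- abstract form of "max of a difference" -/
lemma aux_max_sub {K : Type*} [Field K] (c₁ c₂ c₃ : α → K)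
    (hsum : ∀ a, c₃ a = c₁ a - c₂ a) (s₁ s₂ s₃ : Finset α)
    (hm₁ : ∀ a, a ∈ s₁ ↔ c₁ a ≠ 0) (hm₂ : ∀ a, a ∈ s₂ ↔ c₂ a ≠ 0)
    (hm₃ : ∀ a, a ∈ s₃ ↔ c₃ a ≠ 0) (t : α)
    (h₁ : s₁.max = (t : WithBot α)) (h₂ : s₂.max < (t : WithBot α)) :
    s₃.max = (t : WithBot α) := by
  have htu : t ∈ s₁ := Finset.mem_of_max h₁
  have hzc : c₂ t = 0 := by
    by_contra hc
    exact absurd (lt_of_le_of_lt (Finset.le_max ((hm₂ t).mpr hc)) h₂) (lt_irrefl _)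
  have hm : t ∈ s₃ := by
    rw [hm₃, hsum, hzc, sub_zero]; exact (hm₁ t).mp htu
  apply le_antisymm
  · apply Finset.max_le
    intro a ha
    have h := (hm₃ a).mp ha
    have : c₁ a ≠ 0 ∨ c₂ a ≠ 0 := by
      by_contra hcon
      push_neg at hcon
      exact h (by rw [hsum, hcon.1, hcon.2, sub_zero])
    rcases this with h1 | h1
    · exact le_of_le_of_eq (Finset.le_max ((hm₁ a).mpr h1)) h₁
    · exact le_of_lt (lt_of_le_of_lt (Finset.le_max ((hm₂ a).mpr h1)) h₂)
  · exact Finset.le_max hm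

lemma aux_coe_lt_coe {a b : α} (h : a < b) : (a : WithBot α) < (b : WithBot α) :=
  WithBot.coe_lt_coe.mpr h

lemma aux_max_image {β : Type*} [DecidableEq β] [LinearOrder β] (f : α → β)
    (hf : ∀ a b : α, a < b → f a < f b) (s : Finset α) (t : α)
    (hs : s.max = (t : WithBot α)) : (s.image f).max = (f t : WithBot β) := by
  have htm : t ∈ s := Finset.mem_of_max hs
  apply le_antisymm
  · apply Finset.max_le
    intro b hb
    rcases Finset.mem_image.mp hb with ⟨a, ha, rfl⟩
    have hat : a ≤ t := by
      have := Finset.le_max ha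
      rw [hs] at this
      exact_mod_cast this
    rcases lt_or_eq_of_le hat with hlt | rfl
    · exact le_of_lt (WithBot.coe_lt_coe.mpr (hf a t hlt))
    · exact le_rfl
  · exact Finset.le_max (Finset.mem_image_of_mem f htm)

lemma aux_max_mem_of_ne (s : Finset α) (hs : s.Nonempty) :
    ∃ a ∈ s, s.max = (a : WithBot α) := by
  obtain ⟨a, ha⟩ := Finset.max_of_nonempty hs
  exact ⟨a, Finset.mem_of_max ha, ha⟩

end AbstractAux

noncomputable section ConcreteAux
open MvPolynomial
variable {K : Type*} [Field K] {n m : ℕ}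

lemma aux_mem_msupport {u : ModElem K n m} {s : MTerm n m} :
    s ∈ msupport u ↔ mcoeff u s ≠ 0 := by
  obtain ⟨α, i⟩ := s
  simp only [msupport, mcoeff, Finset.mem_biUnion, Finset.mem_univ, true_and,
    Finset.mem_image, MvPolynomial.mem_support_iff, Prod.mk.injEq]
  constructor
  · rintro ⟨j, β, hβ, rfl, rfl⟩; exact hβ
  · intro hα; exact ⟨i, α, hα, rfl, rfl⟩

lemma aux_msupport_pmul_monomial (γ : PP n) (c : K) (hc : c ≠ 0) (v : ModElem K n m) :
    msupport (pmul (monomial γ c) v) = (msupport v).image (mtmul γ) := by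
  ext ⟨α, i⟩
  simp only [aux_mem_msupport, Finset.mem_image, mcoeff, pmul,
    MvPolynomial.coeff_monomial_mul']
  constructor
  · intro hne
    by_cases hle : γ ≤ α
    · rw [if_pos hle] at hne
      refine ⟨(α - γ, i), ?_, ?_⟩
      · simp only [aux_mem_msupport, mcoeff]
        exact fun h0 => hne (by rw [h0, mul_zero])
      · simp only [mtmul, Prod.mk.injEq]
        exact ⟨add_tsub_cancel_of_le hle, trivial⟩
    · rw [if_neg hle] at hne; exact absurd rfl hne
  · rintro ⟨⟨β, j⟩, hβ, heq⟩
    simp only [mtmul, Prod.mk.injEq] at heq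
    obtain ⟨hγ, rfl⟩ := heq
    subst hγ
    rw [if_pos le_self_add, add_tsub_cancel_left]
    simp only [aux_mem_msupport, mcoeff] at hβ
    exact mul_ne_zero hc hβ

lemma aux_dotF_sub (u z : ModElem K n m) (F : Fin m → MvPolynomial (Fin n) K) :
    dotF (u - z) F = dotF u F - dotF z F := by
  simp [dotF, sub_mul, Finset.sum_sub_distrib]

lemma aux_dotF_pmul (p : MvPolynomial (Fin n) K) (v : ModElem K n m)
    (F : Fin m → MvPolynomial (Fin n) K) : dotF (pmul p v) F = p * dotF v F := by
  simp [dotF, pmul, Finset.mul_sum, mul_assoc]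

lemma aux_lc_ne_zero (o1 : MonOrd n) {h : MvPolynomial (Fin n) K} (hh : h ≠ 0) :
    lc o1 h ≠ 0 := by
  obtain ⟨a, ha, hmax⟩ := @aux_max_mem_of_ne _ o1.ord h.support
    (MvPolynomial.support_nonempty.mpr hh)
  have hla : lpp o1 h = a := by
    unfold lpp lppW
    rw [hmax]; rfl
  rw [lc, hla]
  exact MvPolynomial.mem_support_iff.mp ha

lemma aux_admissible_step (o1 : MonOrd n) (o2 : ModOrd n m)
    (F : Fin m → MvPolynomial (Fin n) K)
    (B : Set (MvPolynomial (Fin n) K × MTerm n m))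
    (hB : ∀ p ∈ B, Admissible o2 F p.1 p.2) (T : MTerm n m)
    {h h' : MvPolynomial (Fin n) K} (hstep : F5Red o1 o2 B T h h')
    (hadm : Admissible o2 F h T) : Admissible o2 F h' T := by
  cases hstep with
  | step q hq hq0 hh hdvd hsig =>
    obtain ⟨u, hu, huT⟩ := hadm
    obtain ⟨v, hv, hvT⟩ := hB q hq
    set γ := lpp o1 h - lpp o1 q.1 with hγ
    set c := lc o1 h / lc o1 q.1 with hc
    have hcne : c ≠ 0 := div_ne_zero (aux_lc_ne_zero o1 hh) (aux_lc_ne_zero o1 hq0)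
    set z : ModElem K n m := pmul (monomial γ c) v with hz
    refine ⟨u - z, ?_, ?_⟩
    · rw [aux_dotF_sub, hz, aux_dotF_pmul, ← hu, ← hv]
    · -- lppMW z = ↑(mtmul γ q.2)
      have hzmax : lppMW o2 z = ((mtmul γ q.2 : MTerm n m) : WithBot (MTerm n m)) := by
        show @Finset.max _ o2.ord (msupport z) = _
        rw [hz, aux_msupport_pmul_monomial γ c hcne v]
        exact @aux_max_image _ o2.ord _ instDecidableEqProd o2.ord (mtmul γ) (o2.mul_lt γ) (msupport v) q.2 hvT
      have hzlt : wbltM o2 (lppMW o2 z) ((T : MTerm n m) : WithBot (MTerm n m)) := by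
        rw [hzmax]
        exact @aux_coe_lt_coe _ o2.ord _ _ hsig
      show @Finset.max _ o2.ord (msupport (u - z)) = _
      refine @aux_max_sub (MTerm n m) o2.ord K _ (mcoeff u) (mcoeff z) (mcoeff (u - z))
        ?_ (msupport u) (msupport z) (msupport (u - z))
        (fun _ => aux_mem_msupport) (fun _ => aux_mem_msupport) (fun _ => aux_mem_msupport)
        T huT hzlt
      intro a
      simp [mcoeff, MvPolynomial.coeff_sub]

end ConcreteAux

/-- If `f^(T)` is admissible and `h` is obtained from `f` by finitely many
one-step F5-reductions by a set `B` of admissible labeled polynomials, then `h^(T)` is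
admissible. Here `≺₂` is the position-over-term extension of `≺₁`. -/
theorem detachability_stmt7 {K : Type*} [Field K] {n m : ℕ}
    (o1 : MonOrd n) (o2 : ModOrd n m) (hpot : IsPOT o1 o2)
    (F : Fin m → MvPolynomial (Fin n) K)
    (B : Set (MvPolynomial (Fin n) K × MTerm n m))
    (hB : ∀ p ∈ B, Admissible o2 F p.1 p.2)
    (f : MvPolynomial (Fin n) K) (T : MTerm n m) (hf : Admissible o2 F f T)
    (h : MvPolynomial (Fin n) K)
    (hred : Relation.ReflTransGen (F5Red o1 o2 B T) f h) :
    Admissible o2 F h T := by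
  induction hred with
  | refl => exact hf
  | tail _ hstep ih => exact aux_admissible_step o1 o2 F B hB T hstep ih
end
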